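/- Let n = 2m be even with m ≥ 1 and let (x_0, ..., x_n) be a symmetrically stretched knot sequence on [a,b]. Suppose τ_1 ≤ τ_2 ≤ ... ≤ τ_{n+1} are nodes in [a,b] with weights ω_1, ..., ω_{n+1} > 0 such that ∫_a^b f(t) dt = Σ_{i=1}^{n+1} ω_i f(τ_i) for every f ∈ S^n_{3,1}, and the rule is symmetric: τ_{n+2-i} = a + b - τ_i and ω_{n+2-i} = ω_i for all i. Then each open interval (x_{k-1}, x_k), k = 1, ..., n, contains exactly one node, and the midpoint x_m = (a+b)/2 is also a node (namely τ_{m+1}). -/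

import Mathlib

open intervalIntegral MeasureTheory

private lemma ptmax (y : ℝ) : max (-y) 0 = max y 0 - y := by
  rcases le_total y 0 with h|h
  · rw [max_eq_left (neg_nonneg.mpr h), max_eq_right h]; ring
  · rw [max_eq_right (neg_nonpos.mpr h), max_eq_left h]; ring

private lemma ptid1 (u v t : ℝ) (h : u ≤ v) :
    (max (t - u) 0)^2 * max (v - t) 0
      = (v - u) * (max (t - u) 0)^2 - (max (t - u) 0)^3
        + (max (t - v) 0)^3 + 2*(v - u)*(max (t - v) 0)^2 + (v - u)^2 * (max (t - v) 0) := by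
  rcases le_total t u with h1|h1
  · rw [max_eq_right (sub_nonpos.mpr h1), max_eq_right (sub_nonpos.mpr (h1.trans h))]; ring
  · rcases le_total t v with h2|h2
    · rw [max_eq_left (sub_nonneg.mpr h1), max_eq_right (sub_nonpos.mpr h2),
        max_eq_left (sub_nonneg.mpr h2)]; ring
    · rw [max_eq_left (sub_nonneg.mpr h1), max_eq_left (sub_nonneg.mpr h2),
        max_eq_right (sub_nonpos.mpr h2)]; ring

private lemma ptid2 (u v t : ℝ) (h : u ≤ v) :
    max (t - u) 0 * (max (v - t) 0)^2
      = (v - u) * (max (v - t) 0)^2 - (max (v - t) 0)^3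
        + (max (u - t) 0)^3 + 2*(v - u)*(max (u - t) 0)^2 + (v - u)^2 * (max (u - t) 0) := by
  rcases le_total t v with h2|h2
  · rcases le_total t u with h1|h1
    · rw [max_eq_right (sub_nonpos.mpr h1), max_eq_left (sub_nonneg.mpr h2),
        max_eq_left (sub_nonneg.mpr h1)]; ring
    · rw [max_eq_left (sub_nonneg.mpr h1), max_eq_left (sub_nonneg.mpr h2),
        max_eq_right (sub_nonpos.mpr h1)]; ring
  · rw [max_eq_right (sub_nonpos.mpr h2), max_eq_right (sub_nonpos.mpr (h.trans h2))]; ring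

private lemma hasDerivAt_q2 (y : ℝ) :
    HasDerivAt (fun z : ℝ => (max z 0)^2) (2 * max y 0) y := by
  rcases lt_trichotomy y 0 with h|h|h
  · have hev : (fun z : ℝ => (max z 0)^2) =ᶠ[nhds y] fun _ => (0:ℝ) := by
      filter_upwards [Iio_mem_nhds h] with z hz
      rw [max_eq_right (le_of_lt hz)]; norm_num
    have h2 := (hasDerivAt_const y (0:ℝ)).congr_of_eventuallyEq hev
    simpa [max_eq_right h.le] using h2
  · subst h
    rw [hasDerivAt_iff_tendsto_slope]
    have hev : slope (fun z : ℝ => (max z 0)^2) 0 =ᶠ[nhdsWithin 0 {(0:ℝ)}ᶜ] fun z => max z 0 := by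
      filter_upwards [self_mem_nhdsWithin] with z hz
      have hz' : z ≠ 0 := hz
      rcases lt_or_gt_of_ne hz' with h1|h1
      · rw [slope_def_field, max_eq_right h1.le]
        simp
      · rw [slope_def_field, max_eq_left h1.le, max_self]
        field_simp
        ring
    rw [Filter.tendsto_congr' hev]
    have h3 : Filter.Tendsto (fun z : ℝ => max z 0) (nhds 0) (nhds (max 0 0)) :=
      (continuous_id.max continuous_const).tendsto 0
    simpa using h3.mono_left nhdsWithin_le_nhds
  · have hev : (fun z : ℝ => (max z 0)^2) =ᶠ[nhds y] fun z => z^2 := by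
      filter_upwards [Ioi_mem_nhds h] with z hz
      rw [max_eq_left (le_of_lt hz)]
    have h2 := (hasDerivAt_pow 2 y).congr_of_eventuallyEq hev
    simpa [max_eq_left h.le] using h2

private lemma hasDerivAt_q3 (y : ℝ) :
    HasDerivAt (fun z : ℝ => (max z 0)^3) (3 * (max y 0)^2) y := by
  have heq : (fun z : ℝ => (max z 0)^3) = fun z => z * (max z 0)^2 := by
    funext z
    rcases le_total z 0 with h|h
    · rw [max_eq_right h]; ring
    · rw [max_eq_left h]; ring
  rw [heq]
  have h2 := (hasDerivAt_id y).mul (hasDerivAt_q2 y)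
  refine (h2 : HasDerivAt (fun z : ℝ => z * (max z 0)^2) _ y).congr_deriv ?_
  rcases le_total y 0 with h|h
  · rw [max_eq_right h]; simp
  · rw [max_eq_left h]
    simp only [id_eq]
    ring

private lemma contDiff_q2 : ContDiff ℝ 1 (fun z : ℝ => (max z 0)^2) := by
  rw [contDiff_one_iff_deriv]
  refine ⟨fun y => (hasDerivAt_q2 y).differentiableAt, ?_⟩
  have h : deriv (fun z : ℝ => (max z 0)^2) = fun y => 2 * max y 0 :=
    funext fun y => (hasDerivAt_q2 y).deriv
  rw [h]; fun_prop

private lemma contDiff_q3 : ContDiff ℝ 1 (fun z : ℝ => (max z 0)^3) := by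
  rw [contDiff_one_iff_deriv]
  refine ⟨fun y => (hasDerivAt_q3 y).differentiableAt, ?_⟩
  have h : deriv (fun z : ℝ => (max z 0)^3) = fun y => 3 * (max y 0)^2 :=
    funext fun y => (hasDerivAt_q3 y).deriv
  rw [h]; fun_prop

private lemma integral_trunc_sq {a w b : ℝ} (h1 : a ≤ w) (h2 : w ≤ b) :
    (∫ t in a..b, (max (t - w) 0)^2) = (b - w)^3/3 := by
  have hcont : Continuous fun t : ℝ => (max (t - w) 0)^2 := by fun_prop
  rw [← intervalIntegral.integral_add_adjacent_intervals
    (hcont.intervalIntegrable a w) (hcont.intervalIntegrable w b)]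
  have e1 : (∫ t in a..w, (max (t - w) 0)^2) = ∫ t in a..w, (0:ℝ) := by
    apply intervalIntegral.integral_congr
    intro t ht
    rw [Set.uIcc_of_le h1] at ht
    show (max (t - w) 0)^2 = 0
    rw [max_eq_right (by linarith [ht.2])]; norm_num
  have e2 : (∫ t in w..b, (max (t - w) 0)^2) = ∫ t in w..b, (t - w)^2 := by
    apply intervalIntegral.integral_congr
    intro t ht
    rw [Set.uIcc_of_le h2] at ht
    show (max (t - w) 0)^2 = (t - w)^2
    rw [max_eq_left (by linarith [ht.1])]
  have e3 : (∫ t in w..b, (t - w)^2) = (b - w)^3/3 := by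
    rw [intervalIntegral.integral_comp_sub_right (fun u => u^2) w]
    rw [integral_pow]
    norm_num
  rw [e1, e2, e3]
  simp

private lemma integral_trunc_cube {a w b : ℝ} (h1 : a ≤ w) (h2 : w ≤ b) :
    (∫ t in a..b, (max (t - w) 0)^3) = (b - w)^4/4 := by
  have hcont : Continuous fun t : ℝ => (max (t - w) 0)^3 := by fun_prop
  rw [← intervalIntegral.integral_add_adjacent_intervals
    (hcont.intervalIntegrable a w) (hcont.intervalIntegrable w b)]
  have e1 : (∫ t in a..w, (max (t - w) 0)^3) = ∫ t in a..w, (0:ℝ) := by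
    apply intervalIntegral.integral_congr
    intro t ht
    rw [Set.uIcc_of_le h1] at ht
    show (max (t - w) 0)^3 = 0
    rw [max_eq_right (by linarith [ht.2])]; norm_num
  have e2 : (∫ t in w..b, (max (t - w) 0)^3) = ∫ t in w..b, (t - w)^3 := by
    apply intervalIntegral.integral_congr
    intro t ht
    rw [Set.uIcc_of_le h2] at ht
    show (max (t - w) 0)^3 = (t - w)^3
    rw [max_eq_left (by linarith [ht.1])]
  have e3 : (∫ t in w..b, (t - w)^3) = (b - w)^4/4 := by
    rw [intervalIntegral.integral_comp_sub_right (fun u => u^3) w]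
    rw [integral_pow]
    norm_num
  rw [e1, e2, e3]
  simp

private lemma integral_trunc_sq' {a w b : ℝ} (h1 : a ≤ w) (h2 : w ≤ b) :
    (∫ t in a..b, (max (w - t) 0)^2) = (w - a)^3/3 := by
  have hcont : Continuous fun t : ℝ => (max (w - t) 0)^2 := by fun_prop
  rw [← intervalIntegral.integral_add_adjacent_intervals
    (hcont.intervalIntegrable a w) (hcont.intervalIntegrable w b)]
  have e1 : (∫ t in a..w, (max (w - t) 0)^2) = ∫ t in a..w, (w - t)^2 := by
    apply intervalIntegral.integral_congr
    intro t ht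
    rw [Set.uIcc_of_le h1] at ht
    show (max (w - t) 0)^2 = (w - t)^2
    rw [max_eq_left (by linarith [ht.2])]
  have e2 : (∫ t in w..b, (max (w - t) 0)^2) = ∫ t in w..b, (0:ℝ) := by
    apply intervalIntegral.integral_congr
    intro t ht
    rw [Set.uIcc_of_le h2] at ht
    show (max (w - t) 0)^2 = 0
    rw [max_eq_right (by linarith [ht.1])]; norm_num
  have e3 : (∫ t in a..w, (w - t)^2) = (w - a)^3/3 := by
    rw [intervalIntegral.integral_comp_sub_left (fun u => u^2) w]
    rw [integral_pow]
    norm_num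
  rw [e1, e2, e3]
  simp

private lemma integral_trunc_cube' {a w b : ℝ} (h1 : a ≤ w) (h2 : w ≤ b) :
    (∫ t in a..b, (max (w - t) 0)^3) = (w - a)^4/4 := by
  have hcont : Continuous fun t : ℝ => (max (w - t) 0)^3 := by fun_prop
  rw [← intervalIntegral.integral_add_adjacent_intervals
    (hcont.intervalIntegrable a w) (hcont.intervalIntegrable w b)]
  have e1 : (∫ t in a..w, (max (w - t) 0)^3) = ∫ t in a..w, (w - t)^3 := by
    apply intervalIntegral.integral_congr
    intro t ht
    rw [Set.uIcc_of_le h1] at ht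
    show (max (w - t) 0)^3 = (w - t)^3
    rw [max_eq_left (by linarith [ht.2])]
  have e2 : (∫ t in w..b, (max (w - t) 0)^3) = ∫ t in w..b, (0:ℝ) := by
    apply intervalIntegral.integral_congr
    intro t ht
    rw [Set.uIcc_of_le h2] at ht
    show (max (w - t) 0)^3 = 0
    rw [max_eq_right (by linarith [ht.1])]; norm_num
  have e3 : (∫ t in a..w, (w - t)^3) = (w - a)^4/4 := by
    rw [intervalIntegral.integral_comp_sub_left (fun u => u^3) w]
    rw [integral_pow]
    norm_num
  rw [e1, e2, e3]
  simp




/-- `x 0, …, x n` is a symmetrically stretched knot sequence on `[a, b]`. -/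
def SymStretched (n : ℕ) (a b : ℝ) (x : ℕ → ℝ) : Prop :=
  x 0 = a ∧ x n = b ∧ (∀ k, k < n → x k < x (k + 1)) ∧
    (∀ k, k ≤ n → x k + x (n - k) = a + b) ∧
    (∀ k, k < n / 2 → x k - 2 * x (k + 1) + x (k + 2) ≥ 0)

/-- `f` belongs to `S^n_{3,1}`: it is `C¹` on `[x 0, x n]` and agrees on each open knot
interval `(x k, x (k+1))` with a polynomial of degree at most `3`. -/
def IsSpline31 (n : ℕ) (x : ℕ → ℝ) (f : ℝ → ℝ) : Prop :=
  ContDiffOn ℝ 1 f (Set.Icc (x 0) (x n)) ∧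
    ∀ k, k < n → ∃ p : Polynomial ℝ, p.degree ≤ 3 ∧
      ∀ t ∈ Set.Ioo (x k) (x (k + 1)), f t = p.eval t

/-- Corollary 1 of the paper, even case `n = 2m`: a symmetric `(n+1)`-point quadrature rule
with positive weights, exact on `S^n_{3,1}`, has exactly one node in each interval
`(x_{k-1}, x_k)`, `k = 1, …, n`, and the midpoint `x_m = (a+b)/2` is also a node,
namely `τ_{m+1}`. -/

theorem stmt6 (m : ℕ) (hm : 1 ≤ m) (n : ℕ) (hn : n = 2 * m) (a b : ℝ) (x : ℕ → ℝ)
    (hx : SymStretched n a b x)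
    (τ ω : ℕ → ℝ)
    (hτmem : ∀ i ∈ Finset.Icc 1 (n + 1), τ i ∈ Set.Icc a b)
    (hsorted : ∀ i, 1 ≤ i → i ≤ n → τ i ≤ τ (i + 1))
    (hω : ∀ i ∈ Finset.Icc 1 (n + 1), 0 < ω i)
    (hexact : ∀ f : ℝ → ℝ, IsSpline31 n x f →
      (∫ t in a..b, f t) = ∑ i ∈ Finset.Icc 1 (n + 1), ω i * f (τ i))
    (hτsym : ∀ i ∈ Finset.Icc 1 (n + 1), τ (n + 2 - i) = a + b - τ i)
    (hωsym : ∀ i ∈ Finset.Icc 1 (n + 1), ω (n + 2 - i) = ω i) :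
    (∀ k, 1 ≤ k → k ≤ n →
      ∃! i, i ∈ Finset.Icc 1 (n + 1) ∧ τ i ∈ Set.Ioo (x (k - 1)) (x k)) ∧
    τ (m + 1) = x m ∧ x m = (a + b) / 2 := by
  classical
  obtain ⟨hx0, hxn, hxlt, hxsym, hxconv⟩ := hx
  have hmn : m ≤ n := by omega
  have hn0 : 0 < n := by omega
  -- monotonicity of knots
  have hmono0 : ∀ j, j ≤ n → ∀ i, i ≤ j → x i ≤ x j := by
    intro j
    induction j with
    | zero => intro _ i hi; rw [Nat.le_zero.mp hi]
    | succ k ih =>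
      intro hk i hi
      rcases Nat.eq_or_lt_of_le hi with h|h
      · subst h; exact le_rfl
      · exact (ih (by omega) i (by omega)).trans (le_of_lt (hxlt k (by omega)))
  have hmono : ∀ i j : ℕ, i ≤ j → j ≤ n → x i ≤ x j := fun i j hij hjn => hmono0 j hjn i hij
  have hab : a < b := by
    have h2 := hxlt (n-1) (by omega)
    rw [show n - 1 + 1 = n by omega] at h2
    have h1 : x 0 ≤ x (n-1) := hmono 0 (n-1) (by omega) (by omega)
    rw [← hx0, ← hxn]; linarith
  have hax : ∀ j, j ≤ n → a ≤ x j := by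
    intro j hj; rw [← hx0]; exact hmono 0 j (by omega) hj
  have hxb : ∀ j, j ≤ n → x j ≤ b := by
    intro j hj; rw [← hxn]; exact hmono j n hj le_rfl
  set I := Finset.Icc 1 (n+1) with hIdef
  -- exactness values
  have hE0 : ∑ i ∈ I, ω i = b - a := by
    have hsp : IsSpline31 n x (fun _ => (1:ℝ)) := by
      exact ⟨contDiffOn_const, fun k hk =>
        ⟨1, le_trans Polynomial.degree_one_le (by decide), fun t _ => by simp⟩⟩
    have h := hexact _ hsp
    rw [intervalIntegral.integral_const] at h
    simp only [smul_eq_mul, mul_one] at h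
    exact h.symm
  have hE1 : ∑ i ∈ I, ω i * τ i = (b^2 - a^2)/2 := by
    have hsp : IsSpline31 n x (fun t => t) := by
      refine ⟨contDiff_id.contDiffOn, fun k hk => ⟨Polynomial.X, ?_, fun t _ => by simp⟩⟩
      rw [Polynomial.degree_X]; decide
    have h := hexact _ hsp
    rw [integral_id] at h
    exact h.symm
  have hE2 : ∀ j, j ≤ n → ∑ i ∈ I, ω i * (max (τ i - x j) 0)^2 = (b - x j)^3/3 := by
    intro j hj
    have hsp : IsSpline31 n x (fun t => (max (t - x j) 0)^2) := by
      constructor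
      · exact (contDiff_q2.comp (contDiff_id.sub contDiff_const)).contDiffOn
      · intro k hk
        by_cases hc : j ≤ k
        · refine ⟨(Polynomial.X - Polynomial.C (x j))^2, ?_, ?_⟩
          · apply le_trans (Polynomial.degree_pow_le _ _)
            rw [Polynomial.degree_X_sub_C]
            decide
          · intro t ht
            have h1 : x j ≤ t := le_of_lt (lt_of_le_of_lt (hmono j k hc (by omega)) ht.1)
            show (max (t - x j) 0)^2 = Polynomial.eval t ((Polynomial.X - Polynomial.C (x j))^2)
            rw [max_eq_left (by linarith)]
            simp
        · push_neg at hc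
          refine ⟨0, by simp, ?_⟩
          intro t ht
          have h1 : x (k+1) ≤ x j := hmono (k+1) j (by omega) hj
          show (max (t - x j) 0)^2 = Polynomial.eval t 0
          rw [max_eq_right (by linarith [ht.2] : t - x j ≤ 0)]
          simp
    have h := hexact _ hsp
    rw [integral_trunc_sq (hax j hj) (hxb j hj)] at h
    exact h.symm
  have hE3 : ∀ j, j ≤ n → ∑ i ∈ I, ω i * (max (τ i - x j) 0)^3 = (b - x j)^4/4 := by
    intro j hj
    have hsp : IsSpline31 n x (fun t => (max (t - x j) 0)^3) := by
      constructor
      · exact (contDiff_q3.comp (contDiff_id.sub contDiff_const)).contDiffOn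
      · intro k hk
        by_cases hc : j ≤ k
        · refine ⟨(Polynomial.X - Polynomial.C (x j))^3, ?_, ?_⟩
          · apply le_trans (Polynomial.degree_pow_le _ _)
            rw [Polynomial.degree_X_sub_C]
            decide
          · intro t ht
            have h1 : x j ≤ t := le_of_lt (lt_of_le_of_lt (hmono j k hc (by omega)) ht.1)
            show (max (t - x j) 0)^3 = Polynomial.eval t ((Polynomial.X - Polynomial.C (x j))^3)
            rw [max_eq_left (by linarith)]
            simp
        · push_neg at hc
          refine ⟨0, by simp, ?_⟩
          intro t ht
          have h1 : x (k+1) ≤ x j := hmono (k+1) j (by omega) hj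
          show (max (t - x j) 0)^3 = Polynomial.eval t 0
          rw [max_eq_right (by linarith [ht.2] : t - x j ≤ 0)]
          simp
    have h := hexact _ hsp
    rw [integral_trunc_cube (hax j hj) (hxb j hj)] at h
    exact h.symm
  have hM2 : ∀ j, j ≤ n → ∑ i ∈ I, ω i * (max (x j - τ i) 0)^2 = (x j - a)^3/3 := by
    intro j hj
    have hsp : IsSpline31 n x (fun t => (max (x j - t) 0)^2) := by
      constructor
      · exact (contDiff_q2.comp (contDiff_const.sub contDiff_id)).contDiffOn
      · intro k hk
        by_cases hc : j ≤ k
        · refine ⟨0, by simp, ?_⟩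
          intro t ht
          have h1 : x j ≤ x k := hmono j k hc (by omega)
          show (max (x j - t) 0)^2 = Polynomial.eval t 0
          rw [max_eq_right (by linarith [ht.1] : x j - t ≤ 0)]
          simp
        · push_neg at hc
          refine ⟨(Polynomial.C (x j) - Polynomial.X)^2, ?_, ?_⟩
          · apply le_trans (Polynomial.degree_pow_le _ _)
            have : (Polynomial.C (x j) - Polynomial.X).degree = 1 := by
              rw [← Polynomial.degree_neg]; simp [Polynomial.degree_X_sub_C]
            rw [this]; decide
          · intro t ht
            have h1 : x (k+1) ≤ x j := hmono (k+1) j (by omega) hj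
            show (max (x j - t) 0)^2 = Polynomial.eval t ((Polynomial.C (x j) - Polynomial.X)^2)
            rw [max_eq_left (by linarith [ht.2])]
            simp
    have h := hexact _ hsp
    rw [integral_trunc_sq' (hax j hj) (hxb j hj)] at h
    exact h.symm
  have hM3 : ∀ j, j ≤ n → ∑ i ∈ I, ω i * (max (x j - τ i) 0)^3 = (x j - a)^4/4 := by
    intro j hj
    have hsp : IsSpline31 n x (fun t => (max (x j - t) 0)^3) := by
      constructor
      · exact (contDiff_q3.comp (contDiff_const.sub contDiff_id)).contDiffOn
      · intro k hk
        by_cases hc : j ≤ k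
        · refine ⟨0, by simp, ?_⟩
          intro t ht
          have h1 : x j ≤ x k := hmono j k hc (by omega)
          show (max (x j - t) 0)^3 = Polynomial.eval t 0
          rw [max_eq_right (by linarith [ht.1] : x j - t ≤ 0)]
          simp
        · push_neg at hc
          refine ⟨(Polynomial.C (x j) - Polynomial.X)^3, ?_, ?_⟩
          · apply le_trans (Polynomial.degree_pow_le _ _)
            have : (Polynomial.C (x j) - Polynomial.X).degree = 1 := by
              rw [← Polynomial.degree_neg]; simp [Polynomial.degree_X_sub_C]
            rw [this]; decide
          · intro t ht
            have h1 : x (k+1) ≤ x j := hmono (k+1) j (by omega) hj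
            show (max (x j - t) 0)^3 = Polynomial.eval t ((Polynomial.C (x j) - Polynomial.X)^3)
            rw [max_eq_left (by linarith [ht.2])]
            simp
    have h := hexact _ hsp
    rw [integral_trunc_cube' (hax j hj) (hxb j hj)] at h
    exact h.symm
  -- the discrete "first moment" function σ
  set SIG : ℕ → ℝ := fun k => (∑ i ∈ I, ω i * max (τ i - x k) 0) - (b - x k)^2/2 with hSIGdef
  have hSIGval : ∀ k, SIG k = (∑ i ∈ I, ω i * max (τ i - x k) 0) - (b - x k)^2/2 := fun k => rfl
  have hSIG0 : SIG 0 = 0 := by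
    rw [hSIGval]
    have hpt : ∀ i ∈ I, ω i * max (τ i - x 0) 0 = ω i * τ i - x 0 * ω i := by
      intro i hi
      have h1 : x 0 ≤ τ i := by rw [hx0]; exact (hτmem i hi).1
      rw [max_eq_left (by linarith)]
      ring
    rw [Finset.sum_congr rfl hpt, Finset.sum_sub_distrib, ← Finset.mul_sum, hE1, hE0, hx0]
    ring
  have hconv : ∀ j, j ≤ n → ∑ i ∈ I, ω i * max (x j - τ i) 0
      = (∑ i ∈ I, ω i * max (τ i - x j) 0) + (x j * (b - a) - (b^2 - a^2)/2) := by
    intro j hj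
    have hpt : ∀ i ∈ I, ω i * max (x j - τ i) 0
        = ω i * max (τ i - x j) 0 + (x j * ω i - ω i * τ i) := by
      intro i hi
      have h2 : x j - τ i = -(τ i - x j) := by ring
      rw [h2, ptmax]
      ring
    rw [Finset.sum_congr rfl hpt, Finset.sum_add_distrib, Finset.sum_sub_distrib,
      ← Finset.mul_sum, hE0, hE1]
  -- the two window identities
  have keyD : ∀ j, j < n → ∑ i ∈ I, ω i * ((max (τ i - x j) 0)^2 * max (x (j+1) - τ i) 0)
      = (x (j+1) - x j)^4/12 + (x (j+1) - x j)^2 * SIG (j+1) := by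
    intro j hj
    have hle : x j ≤ x (j+1) := (hxlt j hj).le
    have hpt : ∀ i ∈ I, ω i * ((max (τ i - x j) 0)^2 * max (x (j+1) - τ i) 0)
        = (x (j+1) - x j) * (ω i * (max (τ i - x j) 0)^2) - ω i * (max (τ i - x j) 0)^3
          + ((ω i * (max (τ i - x (j+1)) 0)^3
            + 2*(x (j+1) - x j) * (ω i * (max (τ i - x (j+1)) 0)^2))
            + (x (j+1) - x j)^2 * (ω i * max (τ i - x (j+1)) 0)) := by
      intro i _
      linear_combination (ω i) * ptid1 (x j) (x (j+1)) (τ i) hle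
    rw [Finset.sum_congr rfl hpt]
    rw [Finset.sum_add_distrib, Finset.sum_sub_distrib, Finset.sum_add_distrib,
      Finset.sum_add_distrib, ← Finset.mul_sum, ← Finset.mul_sum, ← Finset.mul_sum]
    rw [hE2 j (by omega), hE3 j (by omega), hE2 (j+1) (by omega), hE3 (j+1) (by omega)]
    rw [hSIGval]
    ring
  have keyD' : ∀ j, j < n → ∑ i ∈ I, ω i * (max (τ i - x j) 0 * (max (x (j+1) - τ i) 0)^2)
      = (x (j+1) - x j)^4/12 + (x (j+1) - x j)^2 * SIG j := by
    intro j hj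
    have hle : x j ≤ x (j+1) := (hxlt j hj).le
    have hpt : ∀ i ∈ I, ω i * (max (τ i - x j) 0 * (max (x (j+1) - τ i) 0)^2)
        = (x (j+1) - x j) * (ω i * (max (x (j+1) - τ i) 0)^2) - ω i * (max (x (j+1) - τ i) 0)^3
          + ((ω i * (max (x j - τ i) 0)^3
            + 2*(x (j+1) - x j) * (ω i * (max (x j - τ i) 0)^2))
            + (x (j+1) - x j)^2 * (ω i * max (x j - τ i) 0)) := by
      intro i _
      linear_combination (ω i) * ptid2 (x j) (x (j+1)) (τ i) hle
    rw [Finset.sum_congr rfl hpt]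
    rw [Finset.sum_add_distrib, Finset.sum_sub_distrib, Finset.sum_add_distrib,
      Finset.sum_add_distrib, ← Finset.mul_sum, ← Finset.mul_sum, ← Finset.mul_sum]
    rw [hM2 (j+1) (by omega), hM3 (j+1) (by omega), hM3 j (by omega), hM2 j (by omega),
      hconv j (by omega)]
    rw [hSIGval]
    ring
  -- a positive σ-margin forces an interior node, and conversely
  have hnode_of : ∀ j, j < n → 0 < SIG j + (x (j+1) - x j)^2/12 →
      ∃ i ∈ I, τ i ∈ Set.Ioo (x j) (x (j+1)) := by
    intro j hj hpos
    have h := keyD' j hj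
    have hh : 0 < (x (j+1) - x j)^2 := pow_pos (sub_pos.mpr (hxlt j hj)) 2
    have hsum : (0:ℝ) < ∑ i ∈ I, ω i * (max (τ i - x j) 0 * (max (x (j+1) - τ i) 0)^2) := by
      rw [h]
      nlinarith [mul_pos hh hpos]
    obtain ⟨i, hi, hne⟩ := Finset.exists_ne_zero_of_sum_ne_zero hsum.ne'
    refine ⟨i, hi, ?_⟩
    by_contra hcon
    apply hne
    rw [Set.mem_Ioo] at hcon
    push_neg at hcon
    rcases le_or_gt (τ i) (x j) with hc|hc
    · rw [max_eq_right (sub_nonpos.mpr hc)]; ring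
    · rw [max_eq_right (sub_nonpos.mpr (hcon hc))]; ring
  have hnext : ∀ j, j < n → (∃ i ∈ I, τ i ∈ Set.Ioo (x j) (x (j+1))) →
      0 < SIG (j+1) + (x (j+1) - x j)^2/12 := by
    rintro j hj ⟨i0, hi0, hio⟩
    have h := keyD j hj
    have hsum : (0:ℝ) < ∑ i ∈ I, ω i * ((max (τ i - x j) 0)^2 * max (x (j+1) - τ i) 0) := by
      apply Finset.sum_pos'
      · intro i hi
        have := (hω i hi).le
        have h1 : (0:ℝ) ≤ max (τ i - x j) 0 := le_max_right _ _
        have h2 : (0:ℝ) ≤ max (x (j+1) - τ i) 0 := le_max_right _ _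
        positivity
      · refine ⟨i0, hi0, ?_⟩
        have h1 : 0 < τ i0 - x j := sub_pos.mpr hio.1
        have h2 : 0 < x (j+1) - τ i0 := sub_pos.mpr hio.2
        rw [max_eq_left h1.le, max_eq_left h2.le]
        have := hω i0 hi0
        positivity
    rw [h] at hsum
    have hh : 0 < (x (j+1) - x j)^2 := pow_pos (sub_pos.mpr (hxlt j hj)) 2
    by_contra hcon
    push_neg at hcon
    nlinarith [mul_nonpos_of_nonneg_of_nonpos hh.le (by linarith : SIG (j+1) + (x (j+1) - x j)^2/12 ≤ 0)]
  -- main induction along the left half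
  have hmain : ∀ j, j < m → 0 < SIG j + (x (j+1) - x j)^2/12 := by
    intro j
    induction j with
    | zero =>
      intro _
      rw [hSIG0]
      have h2 : 0 < (x 1 - x 0)^2 := pow_pos (sub_pos.mpr (hxlt 0 hn0)) 2
      linarith
    | succ k ih =>
      intro hk
      have hkn : k < n := by omega
      have h2 := hnext k hkn (hnode_of k hkn (ih (by omega)))
      have hs := hxconv k (by omega : k < n / 2)
      have hl1 : 0 < x (k+1) - x k := sub_pos.mpr (hxlt k hkn)
      have hsq : (x (k+1) - x k)^2 ≤ (x (k+2) - x (k+1))^2 := by nlinarith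
      linarith
  have nodesL : ∀ j, j < m → ∃ i ∈ I, τ i ∈ Set.Ioo (x j) (x (j+1)) :=
    fun j hj => hnode_of j (by omega) (hmain j hj)
  have nodesAll : ∀ j, j < n → ∃ i ∈ I, τ i ∈ Set.Ioo (x j) (x (j+1)) := by
    intro j hj
    rcases lt_or_ge j m with hjm|hjm
    · exact nodesL j hjm
    · obtain ⟨i, hi, hio⟩ := nodesL (n - 1 - j) (by omega)
      have hiI := Finset.mem_Icc.mp hi
      refine ⟨n + 2 - i, Finset.mem_Icc.mpr (by omega), ?_⟩
      have hτs := hτsym i hi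
      have e1 : x ((n - 1 - j) + 1) + x (n - ((n-1-j)+1)) = a + b := hxsym ((n-1-j)+1) (by omega)
      rw [show n - ((n-1-j)+1) = j by omega] at e1
      have e2 : x (n - 1 - j) + x (n - (n - 1 - j)) = a + b := hxsym (n-1-j) (by omega)
      rw [show n - (n - 1 - j) = j + 1 by omega] at e2
      constructor
      · rw [hτs]; have := hio.2; linarith
      · rw [hτs]; have := hio.1; linarith
  -- midpoint facts
  have hxm : x m = (a + b)/2 := by
    have h := hxsym m hmn
    rw [show n - m = m by omega] at h
    linarith
  have hτm : τ (m+1) = x m := by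
    have h := hτsym (m+1) (Finset.mem_Icc.mpr (by omega))
    rw [show n + 2 - (m+1) = m + 1 by omega] at h
    rw [hxm]; linarith
  have hτm_not : ∀ j, j < n → τ (m+1) ∉ Set.Ioo (x j) (x (j+1)) := by
    intro j hj hmem
    rw [Set.mem_Ioo, hτm] at hmem
    rcases le_or_gt (j+1) m with hc|hc
    · have : x (j+1) ≤ x m := hmono (j+1) m hc hmn
      linarith [hmem.2]
    · have : x m ≤ x j := hmono m j (by omega) (by omega)
      linarith [hmem.1]
  -- counting argument
  have nodesAll' : ∀ j, ∃ i, j < n → (i ∈ I ∧ τ i ∈ Set.Ioo (x j) (x (j+1))) := by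
    intro j
    by_cases h : j < n
    · obtain ⟨i, hi, h2⟩ := nodesAll j h
      exact ⟨i, fun _ => ⟨hi, h2⟩⟩
    · exact ⟨0, fun h' => absurd h' h⟩
  choose c hc using nodesAll'
  have hdisj : ∀ j1 j2, j1 < n → j2 < n → ∀ t : ℝ,
      t ∈ Set.Ioo (x j1) (x (j1+1)) → t ∈ Set.Ioo (x j2) (x (j2+1)) → j1 = j2 := by
    intro j1 j2 h1 h2 t ht1 ht2
    by_contra hne
    rcases lt_or_gt_of_ne hne with hlt|hlt
    · have : x (j1+1) ≤ x j2 := hmono (j1+1) j2 (by omega) (by omega)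
      have := ht1.2; have := ht2.1; linarith
    · have : x (j2+1) ≤ x j1 := hmono (j2+1) j1 (by omega) (by omega)
      have := ht2.2; have := ht1.1; linarith
  have hinj : Set.InjOn c ↑(Finset.range n) := by
    intro j1 h1 j2 h2 he
    rw [Finset.mem_coe, Finset.mem_range] at h1 h2
    exact hdisj j1 j2 h1 h2 (τ (c j1)) (hc j1 h1).2 (he ▸ (hc j2 h2).2)
  have hsubT : ∀ j, j < n → c j ∈ I.erase (m+1) := by
    intro j hj
    refine Finset.mem_erase.mpr ⟨?_, (hc j hj).1⟩
    intro hEq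
    exact hτm_not j hj (hEq ▸ (hc j hj).2)
  have hcardT : (I.erase (m+1)).card = n := by
    rw [Finset.card_erase_of_mem (Finset.mem_Icc.mpr (by omega)), Nat.card_Icc]
    omega
  have himg : (Finset.range n).image c = I.erase (m+1) := by
    apply Finset.eq_of_subset_of_card_le
    · intro i hi
      obtain ⟨j, hj, rfl⟩ := Finset.mem_image.mp hi
      exact hsubT j (Finset.mem_range.mp hj)
    · rw [hcardT, Finset.card_image_of_injOn hinj, Finset.card_range]
  refine ⟨?_, hτm, hxm⟩
  intro k hk1 hkn
  obtain ⟨j0, rfl⟩ : ∃ j, k = j + 1 := ⟨k - 1, by omega⟩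
  have hj0 : j0 < n := by omega
  rw [show j0 + 1 - 1 = j0 by omega]
  refine ⟨c j0, ⟨(hc j0 hj0).1, (hc j0 hj0).2⟩, ?_⟩
  rintro i' ⟨hi'I, hi'o⟩
  have hi'T : i' ∈ I.erase (m+1) := by
    refine Finset.mem_erase.mpr ⟨?_, hi'I⟩
    intro hEq
    exact hτm_not j0 hj0 (hEq ▸ hi'o)
  rw [← himg] at hi'T
  obtain ⟨j, hjr, hji⟩ := Finset.mem_image.mp hi'T
  have hjn : j < n := Finset.mem_range.mp hjr
  have hjj : j = j0 := hdisj j j0 hjn hj0 (τ i') (hji ▸ (hc j hjn).2) hi'o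
  rw [← hji, hjj]
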